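/- Let U ⊆ ℝⁿ be open and assume the bounded function u ∈ Lip_loc(U) satisfies the pointwise convexity criterion in U. Suppose x, y ∈ U and 0 < t < δ(x) (where δ(x) is as in the pointwise convexity criterion) are such that T^t u(x) = u(y) − t L((y − x)/t). Then (T^t u(x) − u(x))/t ≤ S⁺u(y). -/

import Mathlib

open Set Metric MeasureTheory Filter Bornology
open scoped RealInnerProductSpace

noncomputable section

abbrev Euc (n : ℕ) := EuclideanSpace ℝ (Fin n)

variable {n : ℕ}

/-- The Lagrangian of `H`, an extended real number. -/
def Lag (H : Euc n → ℝ) (q : Euc n) : EReal :=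
  ⨆ p : Euc n, ((⟪p, q⟫ - H p : ℝ) : EReal)

/-- `T^t u (x)`, with supremum taken over `y ∈ S`. Points `y` where the Lagrangian term
is `+∞` contribute nothing, since no real number equals `-∞`. -/
def TupOn (H : Euc n → ℝ) (S : Set (Euc n)) (u : Euc n → ℝ) (t : ℝ) (x : Euc n) : ℝ :=
  if t = 0 then u x
  else sSup {r : ℝ | ∃ y ∈ S, (r : EReal) = (u y : EReal) - (t : EReal) * Lag H (t⁻¹ • (y - x))}

/-- `T_t u (x)`, with infimum taken over `y ∈ S`. -/
def TdnOn (H : Euc n → ℝ) (S : Set (Euc n)) (u : Euc n → ℝ) (t : ℝ) (x : Euc n) : ℝ :=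
  if t = 0 then u x
  else sInf {r : ℝ | ∃ y ∈ S, (r : EReal) = (u y : EReal) + (t : EReal) * Lag H (t⁻¹ • (x - y))}

/-- `S⁺ u (x) = limsup_{t ↓ 0} (T^t u(x) - u(x))/t`. -/
def Splus (H : Euc n → ℝ) (U : Set (Euc n)) (u : Euc n → ℝ) (x : Euc n) : ℝ :=
  limsup (fun t => (TupOn H U u t x - u x) / t) (nhdsWithin 0 (Ioi 0))

/-- The oscillation `osc_U u = sup_U u - inf_U u`. -/
def oscOn (u : Euc n → ℝ) (U : Set (Euc n)) : ℝ := sSup (u '' U) - sInf (u '' U)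

/-- `U_r = {x ∈ U : dist(x, ∂U) > r}`. -/
def inUr (U : Set (Euc n)) (r : ℝ) : Set (Euc n) := {x ∈ U | r < infDist x (frontier U)}

/-- The cone function `C_k(x) = max {p·x : H(p) = k}`. -/
def coneFn (H : Euc n → ℝ) (k : ℝ) (x : Euc n) : ℝ :=
  sSup {r : ℝ | ∃ p, H p = k ∧ r = ⟪p, x⟫}

/-- The subdifferential of `H` at `p`. -/
def subdiff (H : Euc n → ℝ) (p : Euc n) : Set (Euc n) :=
  {q | ∀ p', H p + ⟪q, p' - p⟫ ≤ H p'}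

/-- `Γ_k`: subgradients of `H` at points of the level set `H⁻¹(k)`. -/
def GammaSet (H : Euc n → ℝ) (k : ℝ) : Set (Euc n) :=
  {q | ∃ p, H p = k ∧ q ∈ subdiff H p}

/-- `W_k`: subgradients of `H` at points of the sublevel set `H⁻¹([0,k])`. -/
def WSet (H : Euc n → ℝ) (k : ℝ) : Set (Euc n) :=
  {q | ∃ p, 0 ≤ H p ∧ H p ≤ k ∧ q ∈ subdiff H p}

/-- `u ∈ Lip_loc(U)`: `u` is locally Lipschitz on `U`. -/
def LocLipOn (u : Euc n → ℝ) (U : Set (Euc n)) : Prop :=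
  ∀ x ∈ U, ∃ K : NNReal, ∃ s ∈ nhdsWithin x U, LipschitzOnWith K u s

/-- `ess sup_V H(Dv)`, defined to be `+∞` if `v` is not locally Lipschitz in `V`.
Here `Dv` is the a.e.-defined gradient (Rademacher). -/
def essSupH (H : Euc n → ℝ) (V : Set (Euc n)) (v : Euc n → ℝ) : EReal :=
  haveI := Classical.propDecidable (LocLipOn v V)
  if LocLipOn v V then
    essSup (fun x => ((H (gradient v x) : ℝ) : EReal)) (volume.restrict V)
  else ⊤

/-- `u` is absolutely subminimizing for `H` in `U`. -/
def AbsSubmin (H : Euc n → ℝ) (U : Set (Euc n)) (u : Euc n → ℝ) : Prop :=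
  LocLipOn u U ∧
  ∀ V : Set (Euc n), IsOpen V → IsCompact (closure V) → closure V ⊆ U →
    ∀ v : Euc n → ℝ, LocLipOn v V → ContinuousOn v (closure V) →
      EqOn v u (frontier V) → (∀ x ∈ V, v x ≤ u x) →
        essSupH H V u ≤ essSupH H V v

/-- `u` is absolutely superminimizing for `H` in `U`. -/
def AbsSupermin (H : Euc n → ℝ) (U : Set (Euc n)) (u : Euc n → ℝ) : Prop :=
  LocLipOn u U ∧
  ∀ V : Set (Euc n), IsOpen V → IsCompact (closure V) → closure V ⊆ U →
    ∀ v : Euc n → ℝ, LocLipOn v V → ContinuousOn v (closure V) →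
      EqOn v u (frontier V) → (∀ x ∈ V, u x ≤ v x) →
        essSupH H V u ≤ essSupH H V v

/-- `u` satisfies comparisons with cones from above in `U`. -/
def CmpConesAbove (H : Euc n → ℝ) (U : Set (Euc n)) (u : Euc n → ℝ) : Prop :=
  ∀ k : ℝ, 0 ≤ k → ∀ V : Set (Euc n), IsOpen V → IsCompact (closure V) → closure V ⊆ U →
    ∀ x₀, x₀ ∉ V →
      sSup ((fun x => u x - coneFn H k (x - x₀)) '' closure V) =
      sSup ((fun x => u x - coneFn H k (x - x₀)) '' frontier V)

/-- `u` satisfies the convexity criterion in `U`. -/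
def ConvexityCriterion (H : Euc n → ℝ) (U : Set (Euc n)) (u : Euc n → ℝ) : Prop :=
  ∀ V : Set (Euc n), IsOpen V → IsCompact (closure V) → closure V ⊆ U →
    ∃ δ > (0:ℝ), ∀ x ∈ V, ConvexOn ℝ (Icc 0 δ) (fun t => TupOn H U u t x)

/-- `u` satisfies the pointwise convexity criterion in `U`. -/
def PtwiseCC (H : Euc n → ℝ) (U : Set (Euc n)) (u : Euc n → ℝ) : Prop :=
  UpperSemicontinuousOn (Splus H U u) U ∧
  ∀ x ∈ U, ∃ δ > (0:ℝ), ConvexOn ℝ (Icc 0 δ) (fun t => TupOn H U u t x)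

end


/-!
Put `q = (y - x)/t`, `ℓ = L(q)` and let `c` be the slope `(T^t u(x) - u(x))/t`. Testing
`T^{t-a} u(x)` with the point `y - a q` and using that `s ↦ T^s u(x)` lies below its chord on
`[0, t]` shows `u(y - a q) ≤ u(y) - a (c + ℓ)`. Hence for `ε > 0` the function
`b ↦ u(y - b q) + (c + ℓ - ε) b` is not minimised at `0` on a short interval `[0, s]`; at a
minimiser `a > 0`, testing `T^σ u(y - a q)` with `y - (a - σ) q` gives `S⁺u(y - a q) ≥ c - ε`.
As `y - a q` can be taken arbitrarily close to `y`, upper semicontinuity of `S⁺u` yields `S⁺u(y) ≥ c`.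
-/

open Topology

lemma LocLipOn.continuousOn {n : ℕ} {u : Euc n → ℝ} {U : Set (Euc n)} (hu : LocLipOn u U) :
    ContinuousOn u U := fun z hz => by
  obtain ⟨K, s, hs, hlip⟩ := hu z hz
  exact (hlip.continuousOn z (mem_of_mem_nhdsWithin hz hs)).mono_of_mem_nhdsWithin hs

lemma exists_le_add_mul_dist {α : Type*} [PseudoMetricSpace α] {u : α → ℝ} {U s : Set α}
    {z : α} {K : NNReal} {M : ℝ} (hz : z ∈ U) (hs : s ∈ 𝓝[U] z) (hlip : LipschitzOnWith K u s)
    (hM : ∀ y ∈ U, u y ≤ M) : ∃ R, ∀ y ∈ U, u y ≤ u z + R * dist y z := by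
  obtain ⟨ρ, hρ, hρs⟩ := Metric.mem_nhdsWithin_iff.1 hs
  refine ⟨max (K : ℝ) ((M - u z) / ρ), fun y hy => ?_⟩
  have hRK : (K : ℝ) ≤ max (K : ℝ) ((M - u z) / ρ) := le_max_left _ _
  have hRM : (M - u z) / ρ ≤ max (K : ℝ) ((M - u z) / ρ) := le_max_right _ _
  rcases lt_or_ge (dist y z) ρ with hyz | hyz
  · have hlip_yz := hlip.dist_le_mul y (hρs ⟨hyz, hy⟩) z (hρs ⟨Metric.mem_ball_self hρ, hz⟩)
    have := le_abs_self (u y - u z)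
    rw [Real.dist_eq] at hlip_yz
    nlinarith [dist_nonneg (x := y) (y := z)]
  · have hMρ : M - u z = (M - u z) / ρ * ρ := by field_simp
    nlinarith [hM y hy, K.2]

section Lagrangian

variable {n : ℕ} {H : Euc n → ℝ}

lemma inner_sub_le_Lag (H : Euc n → ℝ) (p q : Euc n) :
    ((⟪p, q⟫ - H p : ℝ) : EReal) ≤ Lag H q :=
  le_iSup (fun p : Euc n => ((⟪p, q⟫ - H p : ℝ) : EReal)) p

lemma Lag_nonneg (hH0 : H 0 = 0) (q : Euc n) : 0 ≤ Lag H q := by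
  simpa [hH0] using inner_sub_le_Lag H 0 q

lemma exists_Lag_eq_coe_of_coe_eq (hH0 : H 0 = 0) {t a r : ℝ} (ht : 0 < t) {q : Euc n}
    (heq : (r : EReal) = a - t * Lag H q) : ∃ ℓ : ℝ, 0 ≤ ℓ ∧ Lag H q = ℓ ∧ r = a - t * ℓ := by
  have hbot : Lag H q ≠ ⊥ := ne_bot_of_le_ne_bot (by simp) (Lag_nonneg hH0 q)
  have htop : Lag H q ≠ ⊤ := by
    rintro htop
    rw [htop, EReal.mul_top_of_pos (by exact_mod_cast ht), EReal.sub_top] at heq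
    exact EReal.coe_ne_bot r heq
  refine ⟨(Lag H q).toReal, ?_, (EReal.coe_toReal htop hbot).symm, ?_⟩
  · exact EReal.toReal_nonneg (Lag_nonneg hH0 q)
  · rw [← EReal.coe_toReal htop hbot, ← EReal.coe_mul, ← EReal.coe_sub] at heq
    exact_mod_cast heq

lemma exists_mul_norm_sub_le_Lag (hH : Continuous H) (R : ℝ) :
    ∃ C, ∀ w : Euc n, ((R * ‖w‖ - C : ℝ) : EReal) ≤ Lag H w := by
  obtain ⟨C, hC⟩ := (isCompact_closedBall (0 : Euc n) |R|).bddAbove_image hH.continuousOn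
  refine ⟨C, fun w => le_trans ?_ (inner_sub_le_Lag H ((R / ‖w‖) • w) w)⟩
  have hp : (R / ‖w‖) • w ∈ Metric.closedBall (0 : Euc n) |R| := by
    rcases eq_or_ne w 0 with rfl | hw
    · simp
    · simp [norm_smul, norm_ne_zero_iff.2 hw]
  have hinner : ⟪(R / ‖w‖) • w, w⟫ = R * ‖w‖ := by
    rcases eq_or_ne w 0 with rfl | hw
    · simp
    · rw [real_inner_smul_left, real_inner_self_eq_norm_sq]
      field_simp [norm_ne_zero_iff.2 hw]
  rw [EReal.coe_le_coe_iff, hinner]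
  linarith [hC (mem_image_of_mem H hp)]

end Lagrangian

section HopfLax

variable {n : ℕ} {H : Euc n → ℝ} {S : Set (Euc n)} {u : Euc n → ℝ} {t : ℝ} {x y : Euc n}

lemma le_tupOn (hH0 : H 0 = 0) (ht : 0 < t) {M : ℝ} (hM : ∀ z ∈ S, u z ≤ M) (hy : y ∈ S)
    {ℓ : ℝ} (hℓ : Lag H (t⁻¹ • (y - x)) = ℓ) : u y - t * ℓ ≤ TupOn H S u t x := by
  rw [TupOn, if_neg ht.ne']
  refine le_csSup ⟨M, ?_⟩ ⟨y, hy, by rw [hℓ]; norm_cast⟩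
  rintro r ⟨z, hz, hr⟩
  obtain ⟨ℓz, hℓz, -, rfl⟩ := exists_Lag_eq_coe_of_coe_eq hH0 ht hr
  nlinarith [hM z hz]

lemma tupOn_le (hH0 : H 0 = 0) (ht : 0 < t)
    (hne : ∃ y ∈ S, ∃ ℓ : ℝ, Lag H (t⁻¹ • (y - x)) = ℓ) {b : ℝ}
    (hb : ∀ y ∈ S, ∃ ℓ : ℝ, (ℓ : EReal) ≤ Lag H (t⁻¹ • (y - x)) ∧ u y - t * ℓ ≤ b) :
    TupOn H S u t x ≤ b := by
  rw [TupOn, if_neg ht.ne']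
  obtain ⟨y₀, hy₀, ℓ₀, hℓ₀⟩ := hne
  refine csSup_le ⟨u y₀ - t * ℓ₀, y₀, hy₀, by rw [hℓ₀]; norm_cast⟩ ?_
  rintro r ⟨z, hz, hr⟩
  obtain ⟨ℓz, -, hLz, rfl⟩ := exists_Lag_eq_coe_of_coe_eq hH0 ht hr
  obtain ⟨ℓ, hℓ, hℓb⟩ := hb z hz
  rw [hLz, EReal.coe_le_coe_iff] at hℓ
  nlinarith

lemma tupOn_le_add_mul (hH0 : H 0 = 0) (ht : 0 < t)
    (hne : ∃ y ∈ S, ∃ ℓ : ℝ, Lag H (t⁻¹ • (y - x)) = ℓ) {R C : ℝ}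
    (hcone : ∀ y ∈ S, u y ≤ u x + R * ‖y - x‖)
    (hLag : ∀ w : Euc n, ((R * ‖w‖ - C : ℝ) : EReal) ≤ Lag H w) :
    TupOn H S u t x ≤ u x + t * C := by
  refine tupOn_le hH0 ht hne fun y hy => ⟨_, hLag _, ?_⟩
  rw [norm_smul, Real.norm_eq_abs, abs_inv, abs_of_pos ht]
  have hcancel : t * (R * (t⁻¹ * ‖y - x‖)) = R * ‖y - x‖ := by field_simp
  linarith [hcone y hy]

end HopfLax

lemma le_limsup_nhdsGT_of_forall_Ioo {f : ℝ → ℝ} {b a m C : ℝ} (ha : b < a)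
    (hlow : ∀ σ ∈ Ioo b a, m ≤ f σ) (hup : ∀ σ ∈ Ioo b a, f σ ≤ C) :
    m ≤ limsup f (𝓝[>] b) := by
  have hev : ∀ᶠ σ in 𝓝[>] b, σ ∈ Ioo b a := Ioo_mem_nhdsGT ha
  exact le_limsup_of_frequently_le (hev.mono hlow).frequently
    ⟨C, eventually_map.2 (hev.mono hup)⟩

/-- The `limsup` in `Splus` is a junk value unless the difference quotients are bounded above;
that bound comes from a cone above `u` at `z` and the superlinear growth of `L`. -/
lemma le_Splus_of_competitors {n : ℕ} {H : Euc n → ℝ} (hHconv : ConvexOn ℝ univ H)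
    (hH0 : H 0 = 0) {U : Set (Euc n)} {u : Euc n → ℝ} (hu : LocLipOn u U)
    {M : ℝ} (hM : ∀ y ∈ U, u y ≤ M) {z : Euc n} (hz : z ∈ U) {a m : ℝ} (ha : 0 < a)
    (hcomp : ∀ σ ∈ Ioo 0 a, ∃ z' ∈ U, ∃ ℓ : ℝ,
      Lag H (σ⁻¹ • (z' - z)) = ℓ ∧ m * σ ≤ u z' - σ * ℓ - u z) :
    m ≤ Splus H U u z := by
  obtain ⟨K, s, hs, hlip⟩ := hu z hz
  obtain ⟨R, hR⟩ := exists_le_add_mul_dist hz hs hlip hM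
  obtain ⟨C, hC⟩ := exists_mul_norm_sub_le_Lag
    (continuousOn_univ.1 (hHconv.continuousOn isOpen_univ)) R
  rw [Splus]
  refine le_limsup_nhdsGT_of_forall_Ioo (C := C) ha (fun σ hσ => ?_) (fun σ hσ => ?_)
  · obtain ⟨z', hz', ℓ, hℓ, hmσ⟩ := hcomp σ hσ
    rw [le_div_iff₀ hσ.1]
    linarith [le_tupOn hH0 hσ.1 hM hz' hℓ]
  · obtain ⟨z', hz', ℓ, hℓ, -⟩ := hcomp σ hσ
    have hcone : ∀ y ∈ U, u y ≤ u z + R * ‖y - z‖ := fun y hy => by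
      simpa [dist_eq_norm] using hR y hy
    rw [div_le_iff₀ hσ.1]
    linarith [tupOn_le_add_mul hH0 hσ.1 ⟨z', hz', ℓ, hℓ⟩ hcone hC]

lemma exists_pos_isMinOn_Icc {g : ℝ → ℝ} {s : ℝ} (hs : 0 ≤ s) (hg : ContinuousOn g (Icc 0 s))
    (hlt : g s < g 0) : ∃ a ∈ Ioc 0 s, IsMinOn g (Icc 0 s) a := by
  obtain ⟨a, ha, hmin⟩ := isCompact_Icc.exists_isMinOn (nonempty_Icc.2 hs) hg
  refine ⟨a, ⟨lt_of_le_of_ne ha.1 ?_, ha.2⟩, hmin⟩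
  rintro rfl
  exact (hmin ⟨hs, le_rfl⟩).not_gt hlt

lemma le_sub_mul_along_segment {n : ℕ} {H : Euc n → ℝ} (hH0 : H 0 = 0) {U : Set (Euc n)}
    {u : Euc n → ℝ} {M : ℝ} (hM : ∀ y ∈ U, u y ≤ M) {x y : Euc n} {t c ℓ a : ℝ} (ht : 0 < t)
    (hconv : ConvexOn ℝ (Icc 0 t) (fun s => TupOn H U u s x))
    (hc : TupOn H U u t x = u x + t * c) (hTt : TupOn H U u t x = u y - t * ℓ)
    (hℓ : Lag H (t⁻¹ • (y - x)) = ℓ) (ha : a ∈ Ico 0 t) (hYa : y - a • t⁻¹ • (y - x) ∈ U) :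
    u (y - a • t⁻¹ • (y - x)) ≤ u y - a * (c + ℓ) := by
  have hta : 0 < t - a := sub_pos.2 ha.2
  have hcompetitor : u (y - a • t⁻¹ • (y - x)) - (t - a) * ℓ ≤ TupOn H U u (t - a) x := by
    refine le_tupOn hH0 hta hM hYa ?_
    rwa [show y - a • t⁻¹ • (y - x) - x = (t - a) • t⁻¹ • (y - x) by
      rw [sub_smul, smul_inv_smul₀ ht.ne']; abel, inv_smul_smul₀ hta.ne']
  have hchord : TupOn H U u (t - a) x ≤ u x + (t - a) * c := by
    have h := hconv.2 (show (0 : ℝ) ∈ Icc 0 t from ⟨le_rfl, ht.le⟩) ⟨ht.le, le_rfl⟩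
      (div_nonneg ha.1 ht.le) (div_nonneg hta.le ht.le)
      (show a / t + (t - a) / t = 1 by field_simp; ring)
    have hT0 : TupOn H U u 0 x = u x := if_pos rfl
    simp only [smul_eq_mul, mul_zero, zero_add, hT0, hc] at h
    rw [div_mul_cancel₀ _ ht.ne'] at h
    have hrhs : a / t * u x + (t - a) / t * (u x + t * c) = u x + (t - a) * c := by
      field_simp; ring
    linarith
  linarith

lemma exists_le_Splus_of_drop {n : ℕ} {H : Euc n → ℝ} (hHconv : ConvexOn ℝ univ H)
    (hH0 : H 0 = 0) {U : Set (Euc n)} {u : Euc n → ℝ} (hu : LocLipOn u U)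
    {M : ℝ} (hM : ∀ y ∈ U, u y ≤ M) {y q : Euc n} {ℓ κ s : ℝ} (hs : 0 < s)
    (hℓ : Lag H q = ℓ) (hseg : ∀ b ∈ Icc 0 s, y - b • q ∈ U)
    (hdrop : u (y - s • q) + κ * s < u y) :
    ∃ a ∈ Ioc 0 s, κ - ℓ ≤ Splus H U u (y - a • q) := by
  have hY : Continuous fun b : ℝ => y - b • q := by fun_prop
  obtain ⟨a, ha, hmin⟩ := exists_pos_isMinOn_Icc (g := fun b => u (y - b • q) + κ * b) hs.le
    ((hu.continuousOn.comp hY.continuousOn hseg).add (by fun_prop))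
    (by simpa using hdrop)
  have hσa : ∀ σ ∈ Ioo 0 a, a - σ ∈ Icc 0 s := fun σ hσ =>
    ⟨by linarith [hσ.2], by linarith [hσ.1, ha.2]⟩
  refine ⟨a, ha, le_Splus_of_competitors hHconv hH0 hu hM (hseg a ⟨ha.1.le, ha.2⟩) ha.1
    fun σ hσ => ⟨y - (a - σ) • q, hseg _ (hσa σ hσ), ℓ, ?_, ?_⟩⟩
  · rw [show y - (a - σ) • q - (y - a • q) = σ • q by rw [sub_smul]; abel,
      inv_smul_smul₀ hσ.1.ne', hℓ]
  · linarith [isMinOn_iff.1 hmin (a - σ) (hσa σ hσ)]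

theorem increasing_slope_estimate_general {n : ℕ} (H : Euc n → ℝ)
    (hHconv : ConvexOn ℝ Set.univ H) (hH0 : H 0 = 0)
    (U : Set (Euc n)) (hU : IsOpen U) (u : Euc n → ℝ)
    (hu : LocLipOn u U) (hub : Bornology.IsBounded (u '' U))
    (hpcc : PtwiseCC H U u)
    (x y : Euc n) (hy : y ∈ U) (t δ : ℝ) (ht : 0 < t)
    (hconv : ConvexOn ℝ (Icc 0 δ) (fun s => TupOn H U u s x)) (htδ : t < δ)
    (heq : ((TupOn H U u t x : ℝ) : EReal) =
      (u y : EReal) - (t : EReal) * Lag H (t⁻¹ • (y - x))) :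
    (TupOn H U u t x - u x) / t ≤ Splus H U u y := by
  obtain ⟨M, hM⟩ := hub.bddAbove
  replace hM : ∀ z ∈ U, u z ≤ M := fun z hz => hM (mem_image_of_mem u hz)
  obtain ⟨ℓ, -, hℓ, hTt⟩ := exists_Lag_eq_coe_of_coe_eq hH0 ht heq
  set c := (TupOn H U u t x - u x) / t
  have hc : TupOn H U u t x = u x + t * c := by simp only [c]; field_simp; ring
  set q := t⁻¹ • (y - x)
  refine le_of_forall_pos_le_add fun ε hε => ?_
  have hY : Tendsto (fun a : ℝ => y - a • q) (𝓝 0) (𝓝 y) :=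
    (show Continuous fun a : ℝ => y - a • q by fun_prop).tendsto' 0 y (by simp)
  have husc := hpcc.1 y hy (Splus H U u y + ε / 2) (by linarith)
  rw [hU.nhdsWithin_eq hy] at husc
  obtain ⟨s, hs, hnear⟩ := Metric.eventually_nhds_iff.1 <|
    (hY.eventually (hU.mem_nhds hy)).and <| (hY.eventually husc).and (gt_mem_nhds ht)
  have hseg : ∀ b ∈ Icc 0 (s / 2), y - b • q ∈ U ∧ Splus H U u (y - b • q) < Splus H U u y + ε / 2 ∧
      b < t := fun b hb => hnear (by rw [Real.dist_0_eq_abs, abs_of_nonneg hb.1]; linarith [hb.2])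
  have hs2 : s / 2 ∈ Icc 0 (s / 2) := ⟨by linarith, le_rfl⟩
  have hdrop := le_sub_mul_along_segment hH0 hM ht
    (hconv.subset (Icc_subset_Icc le_rfl htδ.le) (convex_Icc 0 t)) hc hTt hℓ
    ⟨hs2.1, (hseg _ hs2).2.2⟩ (hseg _ hs2).1
  obtain ⟨a, ha, hSa⟩ := exists_le_Splus_of_drop (κ := c + ℓ - ε / 2) hHconv hH0 hu hM
    (half_pos hs) hℓ (fun b hb => (hseg b hb).1) (by nlinarith)
  linarith [(hseg a ⟨ha.1.le, ha.2⟩).2.1]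

/-- The increasing slope estimate. -/
theorem increasing_slope_estimate {n : ℕ} (hn : 1 ≤ n) (H : Euc n → ℝ)
    (hHconv : ConvexOn ℝ Set.univ H) (hH0 : H 0 = 0) (hHnonneg : ∀ p, 0 ≤ H p)
    (hHzb : Bornology.IsBounded {p : Euc n | H p = 0})
    (hHzi : interior {p : Euc n | H p = 0} = ∅)
    (U : Set (Euc n)) (hU : IsOpen U) (u : Euc n → ℝ)
    (hu : LocLipOn u U) (hub : Bornology.IsBounded (u '' U))
    (hpcc : PtwiseCC H U u)
    (x y : Euc n) (hx : x ∈ U) (hy : y ∈ U) (t δ : ℝ) (ht : 0 < t) (hδ : 0 < δ)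
    (hconv : ConvexOn ℝ (Icc 0 δ) (fun s => TupOn H U u s x)) (htδ : t < δ)
    (heq : ((TupOn H U u t x : ℝ) : EReal) =
      (u y : EReal) - (t : EReal) * Lag H (t⁻¹ • (y - x))) :
    (TupOn H U u t x - u x) / t ≤ Splus H U u y :=
  increasing_slope_estimate_general H hHconv hH0 U hU u hu hub hpcc x y hy t δ ht hconv htδ heq
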